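/- arXiv:0802.1430 — 2 statements merged into one kernel-verified Lean document; each statement's English description precedes it below -/
import Mathlib

section
/- Representer theorem for spectral penalties: Let X, Y be finite-dimensional inner product spaces, let data (x_i, y_i, t_i), i = 1,…,N be given, let R_N(F) = (1/N) Σ_i ℓ(⟨x_i, F y_i⟩, t_i) for any loss ℓ, and let Ω(F) = Σ_i s_i(σ_i(F)) be a spectral penalty with each s_i : ℝ≥0 → ℝ≥0 ∪ {+∞} nondecreasing with s_i(0) = 0. If the problem min_F R_N(F) + λΩ(F) over linear maps F : Y → X has a minimizer, then it has a minimizer lying in (span x_i) ⊗ (span y_i), i.e., of the form F = Σ_{i,j} α_{ij} u_i ⊗ v_j for orthonormal bases (u_i) of span{x_1,…,x_N} and (v_j) of span{y_1,…,y_N}. -/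
open RealInnerProductSpace

noncomputable def singularValue {E F : Type*} [NormedAddCommGroup E] [InnerProductSpace ℝ E]
    [NormedAddCommGroup F] [InnerProductSpace ℝ F]
    (T : E →ₗ[ℝ] F) (i : ℕ) : ℝ :=
  ⨆ V : {V : Submodule ℝ E // Module.finrank ℝ V = i + 1},
    ⨅ x : {x : E // x ∈ V.1 ∧ ‖x‖ = 1}, ‖T x‖
open scoped ENNReal

/-!
Compressing `F` to `P ∘ F ∘ Q`, with `P`, `Q` the orthogonal projections onto the spans of the
`xᵢ` and of the `yᵢ`, leaves every `⟪xᵢ, F yᵢ⟫` and hence the empirical risk unchanged, because `P`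
is self-adjoint and fixes `xᵢ` while `Q` fixes `yᵢ`. It does not increase any singular value: the
infimum of `‖F u‖` over unit vectors `u` of a subspace `V` is the best constant `c` with
`c ‖v‖ ≤ ‖F v‖` on `V`, such a bound for `F ∘ Q` on `V` transfers to `F` on `Q V` (which has the
same dimension when `c > 0`), and one for `P ∘ F` transfers to `F` on `V`. So the penalty, being
monotone in the singular values, does not increase either, and the compression of a minimizer is
again a minimizer.
-/

open Module

section SingularValue

variable {E E' F F' : Type*} [NormedAddCommGroup E] [InnerProductSpace ℝ E]
  [NormedAddCommGroup E'] [InnerProductSpace ℝ E'] [NormedAddCommGroup F] [InnerProductSpace ℝ F]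
  [NormedAddCommGroup F'] [InnerProductSpace ℝ F']

lemma singularValue_nonneg (T : E →ₗ[ℝ] F) (i : ℕ) : 0 ≤ singularValue T i :=
  Real.iSup_nonneg fun _ => Real.iInf_nonneg fun _ => norm_nonneg _

lemma nonempty_unit_of_finrank_eq_succ {V : Submodule ℝ E} {i : ℕ} (hV : finrank ℝ V = i + 1) :
    Nonempty {x : E // x ∈ V ∧ ‖x‖ = 1} := by
  have : Nontrivial V := Module.nontrivial_of_finrank_eq_succ hV
  obtain ⟨v, hv⟩ := exists_norm_eq V zero_le_one
  exact ⟨⟨v, v.2, hv⟩⟩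

lemma iInf_unit_mul_norm_le (T : E →ₗ[ℝ] F) {V : Submodule ℝ E} {x : E} (hx : x ∈ V) :
    (⨅ u : {u : E // u ∈ V ∧ ‖u‖ = 1}, ‖T u‖) * ‖x‖ ≤ ‖T x‖ := by
  rcases eq_or_ne x 0 with rfl | hx0
  · simp
  have hnx : ‖x‖ ≠ 0 := norm_ne_zero_iff.2 hx0
  calc (⨅ u : {u : E // u ∈ V ∧ ‖u‖ = 1}, ‖T u‖) * ‖x‖ ≤ ‖T (‖x‖⁻¹ • x)‖ * ‖x‖ := by
        gcongr
        exact ciInf_le (f := fun u : {u : E // u ∈ V ∧ ‖u‖ = 1} => ‖T u‖)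
          ⟨0, by rintro _ ⟨u, rfl⟩; exact norm_nonneg _⟩ ⟨_, V.smul_mem _ hx, norm_smul_inv_norm hx0⟩
    _ = ‖T x‖ := by
      rw [map_smul, norm_smul, norm_inv, norm_norm, mul_comm, mul_inv_cancel_left₀ hnx]

lemma le_iInf_unit_of_forall {T : E →ₗ[ℝ] F} {V : Submodule ℝ E}
    (hV : Nonempty {x : E // x ∈ V ∧ ‖x‖ = 1}) {c : ℝ} (h : ∀ x ∈ V, c * ‖x‖ ≤ ‖T x‖) :
    c ≤ ⨅ u : {u : E // u ∈ V ∧ ‖u‖ = 1}, ‖T u‖ :=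
  le_ciInf fun u => by simpa [u.2.2] using h u u.2.1

lemma bddAbove_range_iInf_unit [FiniteDimensional ℝ E] (T : E →ₗ[ℝ] F) (i : ℕ) :
    BddAbove (Set.range fun V : {V : Submodule ℝ E // finrank ℝ V = i + 1} =>
      ⨅ u : {u : E // u ∈ V.1 ∧ ‖u‖ = 1}, ‖T u‖) := by
  refine ⟨‖LinearMap.toContinuousLinearMap T‖, ?_⟩
  rintro _ ⟨V, rfl⟩
  obtain ⟨u⟩ := nonempty_unit_of_finrank_eq_succ V.2
  simpa [u.2.2] using
    (iInf_unit_mul_norm_le T u.2.1).trans ((LinearMap.toContinuousLinearMap T).le_opNorm u)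

lemma singularValue_le_of_forall_exists [FiniteDimensional ℝ E'] {S : E →ₗ[ℝ] F}
    {T : E' →ₗ[ℝ] F'} {i : ℕ}
    (h : ∀ V : Submodule ℝ E, finrank ℝ V = i + 1 → ∀ c : ℝ, 0 < c →
      (∀ x ∈ V, c * ‖x‖ ≤ ‖S x‖) →
        ∃ W : Submodule ℝ E', finrank ℝ W = i + 1 ∧ ∀ x ∈ W, c * ‖x‖ ≤ ‖T x‖) :
    singularValue S i ≤ singularValue T i := by
  refine Real.iSup_le (fun V => ?_) (singularValue_nonneg T i)
  rcases le_or_gt (⨅ u : {u : E // u ∈ V.1 ∧ ‖u‖ = 1}, ‖S u‖) 0 with hc | hc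
  · exact hc.trans (singularValue_nonneg T i)
  obtain ⟨W, hW, hcW⟩ := h V.1 V.2 _ hc fun x hx => iInf_unit_mul_norm_le S hx
  exact le_ciSup_of_le (bddAbove_range_iInf_unit T i) ⟨W, hW⟩
    (le_iInf_unit_of_forall (nonempty_unit_of_finrank_eq_succ hW) hcW)

lemma singularValue_comp_le_left [FiniteDimensional ℝ E] (T : E →ₗ[ℝ] F) {P : F →ₗ[ℝ] F'}
    (hP : ∀ z, ‖P z‖ ≤ ‖z‖) (i : ℕ) : singularValue (P ∘ₗ T) i ≤ singularValue T i :=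
  singularValue_le_of_forall_exists fun V hV _ _ hcV =>
    ⟨V, hV, fun x hx => (hcV x hx).trans (hP _)⟩

lemma singularValue_comp_le_right [FiniteDimensional ℝ E] (T : E →ₗ[ℝ] F) {Q : E' →ₗ[ℝ] E}
    (hQ : ∀ z, ‖Q z‖ ≤ ‖z‖) (i : ℕ) : singularValue (T ∘ₗ Q) i ≤ singularValue T i := by
  refine singularValue_le_of_forall_exists fun V hV c hc hcV => ?_
  have hinj : Function.Injective (Q ∘ₗ V.subtype) := by
    rw [← LinearMap.ker_eq_bot, LinearMap.ker_eq_bot']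
    intro v hv
    have hQv : Q v = 0 := hv
    have hbound := hcV v v.2
    rw [LinearMap.comp_apply, hQv, map_zero, norm_zero] at hbound
    exact norm_eq_zero.1 (le_antisymm (nonpos_of_mul_nonpos_right hbound hc) (norm_nonneg _))
  refine ⟨LinearMap.range (Q ∘ₗ V.subtype), (LinearMap.finrank_range_of_inj hinj).trans hV, ?_⟩
  rintro _ ⟨v, rfl⟩
  calc c * ‖Q v‖ ≤ c * ‖(v : E')‖ := by gcongr; exact hQ v
    _ ≤ ‖T (Q v)‖ := hcV v v.2

end SingularValue

lemma inner_starProjection_comp_starProjection_apply {X Y : Type*} [NormedAddCommGroup X]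
    [InnerProductSpace ℝ X] [NormedAddCommGroup Y] [InnerProductSpace ℝ Y]
    (K : Submodule ℝ X) (L : Submodule ℝ Y) [K.HasOrthogonalProjection]
    [L.HasOrthogonalProjection] (F : Y →ₗ[ℝ] X) {u : X} {v : Y} (hu : u ∈ K) (hv : v ∈ L) :
    ⟪u, (K.starProjection.toLinearMap ∘ₗ F ∘ₗ L.starProjection.toLinearMap) v⟫ = ⟪u, F v⟫ := by
  simp [Submodule.starProjection_eq_self_iff.2 hv, ← Submodule.inner_starProjection_left_eq_right,
    Submodule.starProjection_eq_self_iff.2 hu]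

theorem representer_spectral_general
    {X Y : Type*} [NormedAddCommGroup X] [InnerProductSpace ℝ X] [FiniteDimensional ℝ X]
    [NormedAddCommGroup Y] [InnerProductSpace ℝ Y] [FiniteDimensional ℝ Y]
    {N : ℕ} (x : Fin N → X) (y : Fin N → Y) (t : Fin N → ℝ) (ℓ : ℝ → ℝ → ℝ)
    (s : ℕ → ℝ → ℝ≥0∞) (hs_mono : ∀ i, Monotone (s i))
    (lam : ℝ) (hlam : 0 < lam)
    -- objective: empirical risk plus lam times the spectral penalty, valued in EReal
    (J : (Y →ₗ[ℝ] X) → EReal)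
    (hJ : ∀ F, J F =
      (((1 / (N : ℝ)) * ∑ i, ℓ ⟪x i, F (y i)⟫ (t i) : ℝ) : EReal)
        + (lam : EReal) *
          ((∑ i ∈ Finset.range (Module.finrank ℝ Y), s i (singularValue F i) : ℝ≥0∞) : EReal))
    -- if the problem has a minimizer ...
    (hmin : ∃ F₀ : Y →ₗ[ℝ] X, ∀ F : Y →ₗ[ℝ] X, J F₀ ≤ J F) :
    -- ... then it has a minimizer lying in (span xᵢ) ⊗ (span yᵢ),
    -- i.e. satisfying F₁ = P ∘ F₁ ∘ Q for the orthogonal projections onto the data spans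
    ∃ F₁ : Y →ₗ[ℝ] X, (∀ F : Y →ₗ[ℝ] X, J F₁ ≤ J F) ∧
      F₁ = ((Submodule.span ℝ (Set.range x)).subtype ∘ₗ
              (Submodule.orthogonalProjection (Submodule.span ℝ (Set.range x))).toLinearMap) ∘ₗ F₁ ∘ₗ
            ((Submodule.span ℝ (Set.range y)).subtype ∘ₗ
              (Submodule.orthogonalProjection (Submodule.span ℝ (Set.range y))).toLinearMap) := by
  obtain ⟨F₀, hF₀⟩ := hmin
  set Kx := Submodule.span ℝ (Set.range x)
  set Ky := Submodule.span ℝ (Set.range y)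
  change ∃ F₁ : Y →ₗ[ℝ] X, (∀ F, J F₁ ≤ J F) ∧
    F₁ = Kx.starProjection.toLinearMap ∘ₗ F₁ ∘ₗ Ky.starProjection.toLinearMap
  set F₁ := Kx.starProjection.toLinearMap ∘ₗ F₀ ∘ₗ Ky.starProjection.toLinearMap
  have risk_eq : ∀ i, ⟪x i, F₁ (y i)⟫ = ⟪x i, F₀ (y i)⟫ := fun i =>
    inner_starProjection_comp_starProjection_apply Kx Ky F₀
      (Submodule.subset_span (Set.mem_range_self i)) (Submodule.subset_span (Set.mem_range_self i))
  have singularValue_le : ∀ i, singularValue F₁ i ≤ singularValue F₀ i := fun i =>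
    (singularValue_comp_le_left _ Kx.norm_starProjection_apply_le i).trans
      (singularValue_comp_le_right F₀ Ky.norm_starProjection_apply_le i)
  refine ⟨F₁, fun F => le_trans ?_ (hF₀ F), ?_⟩
  · rw [hJ, hJ]
    simp_rw [risk_eq]
    gcongr
    exact_mod_cast Finset.sum_le_sum fun i _ => hs_mono i (singularValue_le i)
  · ext v
    simp [F₁, Submodule.starProjection_eq_self_iff.2 (Submodule.starProjection_apply_mem _ _)]

/-- representer theorem for spectral penalties. -/
theorem representer_spectral
    {X Y : Type*} [NormedAddCommGroup X] [InnerProductSpace ℝ X] [FiniteDimensional ℝ X]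
    [NormedAddCommGroup Y] [InnerProductSpace ℝ Y] [FiniteDimensional ℝ Y]
    {N : ℕ} (x : Fin N → X) (y : Fin N → Y) (t : Fin N → ℝ) (ℓ : ℝ → ℝ → ℝ)
    (s : ℕ → ℝ → ℝ≥0∞) (hs_mono : ∀ i, Monotone (s i)) (hs_zero : ∀ i, s i 0 = 0)
    (lam : ℝ) (hlam : 0 < lam)
    -- objective: empirical risk plus lam times the spectral penalty, valued in EReal
    (J : (Y →ₗ[ℝ] X) → EReal)
    (hJ : ∀ F, J F =
      (((1 / (N : ℝ)) * ∑ i, ℓ ⟪x i, F (y i)⟫ (t i) : ℝ) : EReal)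
        + (lam : EReal) *
          ((∑ i ∈ Finset.range (Module.finrank ℝ Y), s i (singularValue F i) : ℝ≥0∞) : EReal))
    -- if the problem has a minimizer ...
    (hmin : ∃ F₀ : Y →ₗ[ℝ] X, ∀ F : Y →ₗ[ℝ] X, J F₀ ≤ J F) :
    -- ... then it has a minimizer lying in (span xᵢ) ⊗ (span yᵢ),
    -- i.e. satisfying F₁ = P ∘ F₁ ∘ Q for the orthogonal projections onto the data spans
    ∃ F₁ : Y →ₗ[ℝ] X, (∀ F : Y →ₗ[ℝ] X, J F₁ ≤ J F) ∧
      F₁ = ((Submodule.span ℝ (Set.range x)).subtype ∘ₗ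
              (Submodule.orthogonalProjection (Submodule.span ℝ (Set.range x))).toLinearMap) ∘ₗ F₁ ∘ₗ
            ((Submodule.span ℝ (Set.range y)).subtype ∘ₗ
              (Submodule.orthogonalProjection (Submodule.span ℝ (Set.range y))).toLinearMap) :=
  representer_spectral_general x y t ℓ s hs_mono lam hlam J hJ hmin
end

section
/- If ∇H(U,V) = 0 and the Hessian of H(U,V) = G(UVᵀ) at (U,V) is positive semidefinite, and the last columns of U and V are zero, then for perturbations dU, dV which are zero except for arbitrary last columns u, v, positive semidefiniteness of the Hessian implies vᵀ ∇G(UVᵀ) u ≥ 0 for all u, v, hence ∇G(UVᵀ) = 0. -/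
/-!
Perturb `(U, V)` along `(dU, dV)`, where `dU` and `dV` vanish except for last columns `u` and `v`.
Since the last columns of `U` and `V` are zero, the cross terms `U dVᵀ` and `dU Vᵀ` vanish, so
`(U + t dU)(V + t dV)ᵀ = UVᵀ + t² u vᵀ`. Hence the second derivative of `H` in direction
`(dU, dV)` is `2 ∇G(UVᵀ)[u vᵀ]`, which is therefore nonnegative for all `u`, `v`; replacing `u`
by `-u` shows that `∇G(UVᵀ)` vanishes on rank-one matrices, and these span all matrices.
-/

open Matrix

attribute [local instance] Matrix.normedAddCommGroup Matrix.normedSpace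

section SecondDerivativeAlongLine

variable {E E' F : Type*} [NormedAddCommGroup E] [NormedSpace ℝ E]
  [NormedAddCommGroup E'] [NormedSpace ℝ E'] [NormedAddCommGroup F] [NormedSpace ℝ F]

theorem hasDerivAt_comp_add_smul {f : E → F} {x w : E} {t : ℝ}
    (hf : DifferentiableAt ℝ f (x + t • w)) :
    HasDerivAt (fun s : ℝ => f (x + s • w)) (fderiv ℝ f (x + t • w) w) t :=
  hf.hasFDerivAt.comp_hasDerivAt t
    (((hasDerivAt_id t).smul_const w).const_add x |>.congr_deriv (one_smul ℝ w))

theorem fderiv_fderiv_apply_eq_of_hasDerivAt_comp_add_smul {f : E → F} {x w : E}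
    (hf : ContDiff ℝ 2 f) {g' : ℝ → F} {g'' : F}
    (hg' : ∀ t, HasDerivAt (fun s : ℝ => f (x + s • w)) (g' t) t)
    (hg'' : HasDerivAt g' g'' 0) :
    fderiv ℝ (fderiv ℝ f) x w w = g'' := by
  have hg'_eq : g' = fun t => fderiv ℝ f (x + t • w) w := funext fun t =>
    (hg' t).unique (hasDerivAt_comp_add_smul ((hf.differentiable (by norm_num)) _))
  have hf' : DifferentiableAt ℝ (fderiv ℝ f) (x + (0 : ℝ) • w) :=
    ((hf.fderiv_right (m := 1) (by norm_num)).differentiable one_ne_zero) _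
  have hfderiv_line := hasDerivAt_comp_add_smul hf'
  rw [zero_smul, add_zero] at hfderiv_line
  refine HasDerivAt.unique ?_ (hg'_eq ▸ hg'')
  exact (ContinuousLinearMap.apply ℝ F w).hasFDerivAt.comp_hasDerivAt 0 hfderiv_line

theorem hasDerivAt_comp_add_sq_smul {G : E → F} {a m : E} {t : ℝ}
    (hG : DifferentiableAt ℝ G (a + t ^ 2 • m)) :
    HasDerivAt (fun s : ℝ => G (a + s ^ 2 • m))
      ((2 * t) • fderiv ℝ G (a + t ^ 2 • m) m) t := by
  have hcurve : HasDerivAt (fun s : ℝ => a + s ^ 2 • m) ((2 * t) • m) t := by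
    simpa using ((hasDerivAt_pow 2 t).smul_const m).const_add a
  exact (hG.hasFDerivAt.comp_hasDerivAt t hcurve).congr_deriv (map_smul _ _ _)

theorem hasDerivAt_mul_smul_fderiv_comp_add_sq_smul {G : E → F} {a m : E}
    (hG : DifferentiableAt ℝ (fderiv ℝ G) a) :
    HasDerivAt (fun t : ℝ => (2 * t) • fderiv ℝ G (a + t ^ 2 • m) m)
      ((2 : ℝ) • fderiv ℝ G a m) 0 := by
  have hcurve : HasDerivAt (fun s : ℝ => a + s ^ 2 • m) ((2 * (0 : ℝ)) • m) 0 := by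
    simpa using ((hasDerivAt_pow 2 (0 : ℝ)).smul_const m).const_add a
  have hG' : HasDerivAt (fun s : ℝ => fderiv ℝ G (a + s ^ 2 • m) m) 0 0 := by
    have := (ContinuousLinearMap.apply ℝ F m).hasFDerivAt.comp_hasDerivAt (0 : ℝ)
      (hG.hasFDerivAt.comp_hasDerivAt_of_eq (0 : ℝ) hcurve (by simp))
    exact this.congr_deriv (by simp)
  exact (((hasDerivAt_id (0 : ℝ)).const_mul 2).smul hG').congr_deriv (by simp)

theorem fderiv_fderiv_apply_eq_two_smul_fderiv_of_comp_line {f : E → F} {G : E' → F}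
    {x w : E} {a m : E'} (hf : ContDiff ℝ 2 f) (hG : ContDiff ℝ 2 G)
    (h : ∀ t : ℝ, f (x + t • w) = G (a + t ^ 2 • m)) :
    fderiv ℝ (fderiv ℝ f) x w w = (2 : ℝ) • fderiv ℝ G a m := by
  refine fderiv_fderiv_apply_eq_of_hasDerivAt_comp_add_smul hf (fun t => ?_)
    (hasDerivAt_mul_smul_fderiv_comp_add_sq_smul
      ((hG.fderiv_right (m := 1) (by norm_num)).differentiable one_ne_zero a))
  simp only [h]
  exact hasDerivAt_comp_add_sq_smul (hG.differentiable (by norm_num) _)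

end SecondDerivativeAlongLine

namespace Matrix

variable {l m n R : Type*}

theorem contDiff_mul_transpose [Fintype l] [Fintype m] [Fintype n] {k : WithTop ℕ∞} :
    ContDiff ℝ k (fun UV : Matrix l n ℝ × Matrix m n ℝ => UV.1 * UV.2ᵀ) :=
  contDiff_pi.2 fun i => contDiff_pi.2 fun j => by
    simp only [mul_apply, transpose_apply]
    fun_prop

theorem add_smul_mul_transpose_add_smul [Fintype n] [CommRing R]
    {U dU : Matrix l n R} {V dV : Matrix m n R} (hUdV : U * dVᵀ = 0) (hdUV : dU * Vᵀ = 0)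
    (t : R) : (U + t • dU) * (V + t • dV)ᵀ = U * Vᵀ + t ^ 2 • (dU * dVᵀ) := by
  simp only [transpose_add, transpose_smul, Matrix.add_mul, Matrix.mul_add, Matrix.mul_smul,
    Matrix.smul_mul, hUdV, hdUV, smul_zero, add_zero, zero_add, smul_smul, sq]

theorem updateCol_zero_mul_transpose [Fintype n] [DecidableEq n] [NonUnitalNonAssocSemiring R]
    {V : Matrix m n R} {j : n} (hV : ∀ k, V k j = 0) (u : l → R) :
    updateCol 0 j u * Vᵀ = 0 := by
  ext i k
  simp [mul_apply, updateCol_apply, hV]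

theorem mul_transpose_updateCol_zero [Fintype n] [DecidableEq n] [NonUnitalCommSemiring R]
    {U : Matrix l n R} {j : n} (hU : ∀ i, U i j = 0) (v : m → R) :
    U * (updateCol 0 j v)ᵀ = 0 := by
  rw [← transpose_transpose (U * _), transpose_mul, transpose_transpose,
    updateCol_zero_mul_transpose hU, transpose_zero]

theorem updateCol_zero_mul_transpose_updateCol_zero [Fintype n] [DecidableEq n]
    [NonUnitalNonAssocSemiring R] (j : n) (u : l → R) (v : m → R) :
    updateCol 0 j u * (updateCol 0 j v)ᵀ = vecMulVec u v := by
  ext i k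
  simp [mul_apply, updateCol_apply, vecMulVec_apply]

theorem linearMap_eq_zero_of_nonneg_vecMulVec [Finite m] [Finite n] [DecidableEq m]
    [DecidableEq n] [CommRing R] [PartialOrder R] [IsOrderedAddMonoid R] {φ : Matrix m n R →ₗ[R] R}
    (h : ∀ u v, 0 ≤ φ (vecMulVec u v)) :
    φ = 0 := by
  have hzero : ∀ u v, φ (vecMulVec u v) = 0 := fun u v =>
    le_antisymm (by simpa [neg_vecMulVec] using h (-u) v) (h u v)
  refine ext_linearMap R fun i j => LinearMap.ext_ring ?_
  simpa [single_eq_single_vecMulVec_single] using hzero (Pi.single i 1) (Pi.single j 1)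

end Matrix

theorem gradient_zero_of_zero_last_columns_general
    {p q m : ℕ}
    (G : Matrix (Fin p) (Fin q) ℝ → ℝ) (hG_smooth : ContDiff ℝ 2 G)
    (H : Matrix (Fin p) (Fin (m + 1)) ℝ × Matrix (Fin q) (Fin (m + 1)) ℝ → ℝ)
    (hH : ∀ UV, H UV = G (UV.1 * UV.2ᵀ))
    (U : Matrix (Fin p) (Fin (m + 1)) ℝ) (V : Matrix (Fin q) (Fin (m + 1)) ℝ)
    (hU : ∀ i, U i (Fin.last m) = 0) (hV : ∀ j, V j (Fin.last m) = 0)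
    (hhess : ∀ w : Matrix (Fin p) (Fin (m + 1)) ℝ × Matrix (Fin q) (Fin (m + 1)) ℝ,
      0 ≤ fderiv ℝ (fderiv ℝ H) (U, V) w w) :
    fderiv ℝ G (U * Vᵀ) = 0 := by
  have hH_smooth : ContDiff ℝ 2 H := by
    rw [funext hH]
    exact hG_smooth.comp contDiff_mul_transpose
  suffices h : ∀ u v, 0 ≤ fderiv ℝ G (U * Vᵀ) (vecMulVec u v) from
    ContinuousLinearMap.coe_injective
      (linearMap_eq_zero_of_nonneg_vecMulVec (φ := (fderiv ℝ G (U * Vᵀ)).toLinearMap) h)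
  intro u v
  set dU := updateCol (0 : Matrix (Fin p) (Fin (m + 1)) ℝ) (Fin.last m) u
  set dV := updateCol (0 : Matrix (Fin q) (Fin (m + 1)) ℝ) (Fin.last m) v
  have hline (t : ℝ) : H ((U, V) + t • (dU, dV)) = G (U * Vᵀ + t ^ 2 • vecMulVec u v) := by
    rw [hH, ← updateCol_zero_mul_transpose_updateCol_zero (Fin.last m) u v,
      ← add_smul_mul_transpose_add_smul (mul_transpose_updateCol_zero hU v)
        (updateCol_zero_mul_transpose hV u)]
    rfl
  have hhess_line : (0 : ℝ) ≤ (2 : ℝ) • fderiv ℝ G (U * Vᵀ) (vecMulVec u v) :=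
    (hhess (dU, dV)).trans_eq
      (fderiv_fderiv_apply_eq_two_smul_fderiv_of_comp_line hH_smooth hG_smooth hline)
  simpa using hhess_line

/-- if (U,V) is a second-order critical point of H(U,V) = G(UVᵀ) and the last
columns of U and V are zero, then ∇G(UVᵀ) = 0. -/
theorem gradient_zero_of_zero_last_columns
    {p q m : ℕ}
    (G : Matrix (Fin p) (Fin q) ℝ → ℝ) (hG_smooth : ContDiff ℝ 2 G)
    (H : Matrix (Fin p) (Fin (m + 1)) ℝ × Matrix (Fin q) (Fin (m + 1)) ℝ → ℝ)
    (hH : ∀ UV, H UV = G (UV.1 * UV.2ᵀ))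
    (U : Matrix (Fin p) (Fin (m + 1)) ℝ) (V : Matrix (Fin q) (Fin (m + 1)) ℝ)
    (hU : ∀ i, U i (Fin.last m) = 0) (hV : ∀ j, V j (Fin.last m) = 0)
    (hcrit : fderiv ℝ H (U, V) = 0)
    (hhess : ∀ w : Matrix (Fin p) (Fin (m + 1)) ℝ × Matrix (Fin q) (Fin (m + 1)) ℝ,
      0 ≤ fderiv ℝ (fderiv ℝ H) (U, V) w w) :
    fderiv ℝ G (U * Vᵀ) = 0 :=
  gradient_zero_of_zero_last_columns_general G hG_smooth H hH U V hU hV hhess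
end
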